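/- Let 𝖬 ∈ ℝ^{3×3} be symmetric with 𝖬̄ := (1/2)(tr(𝖬)I₃ − 𝖬) positive definite and smallest eigenvalue λ_m > 0, and let k_R, k_p > 0. Let R̃ : ℝ → SO(3), p̃ : ℝ → ℝ³, and d₁, d₂ : ℝ → ℝ³ be such that R̃ and p̃ are differentiable with R̃'(t) = R̃(t)(−k_R ψ(𝖬R̃(t)) + d₁(t))^× and p̃'(t) = −k_p p̃(t) + d₂(t). Define W(t) := (1/4)tr(I₃ − R̃(t)) + ‖p̃(t)‖² and α := min{k_R λ_m, k_p}. Then W is differentiable and satisfies, for all t, the differential inequality W'(t) ≤ −α W(t) + 2 k_R λ_m + ‖d₁(t)‖²/(4 k_R λ_m) + ‖d₂(t)‖²/k_p. -/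

import Mathlib

/-
Along the dynamics, `W' = ½ ψ(R̃)·(−k_R ψ(𝖬R̃) + d₁) + 2 p̃·(−k_p p̃ + d₂)`, because
`tr(A u^×) = −2 ψ(A)·u`. For a normal `R`, in particular a rotation, `ψ(R)·ψ(𝖬R) = ψ(R)ᵀ 𝖬̄ ψ(R) ≥ 0`,
so the attitude damping term can be dropped. Young's inequality `2 x·y ≤ c‖x‖² + ‖y‖²/c` bounds
both disturbance terms. On the rotation group `‖ψ(R)‖² ≤ 3/2` and `tr(I₃ − R) ≤ 6`, so the whole
attitude contribution, including `−α tr(I₃ − R̃)/4`, fits into the constant `2 k_R λ_m`, while the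
translational damping yields `−α ‖p̃‖²` because `α ≤ k_p`.
-/

open Matrix

noncomputable section

/-- `SO(3)`: rotation matrices. -/
def SO3 (R : Matrix (Fin 3) (Fin 3) ℝ) : Prop :=
  R * Rᵀ = 1 ∧ Rᵀ * R = 1 ∧ R.det = 1

/-- Skew-symmetric matrix `u^×` with `u^× y = u × y`. -/
def skew (u : Fin 3 → ℝ) : Matrix (Fin 3) (Fin 3) ℝ :=
  !![0, -u 2, u 1; u 2, 0, -u 0; -u 1, u 0, 0]

/-- `ψ(A) = (1/2)(a₃₂ - a₂₃, a₁₃ - a₃₁, a₂₁ - a₁₂)ᵀ`. -/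
def psiMap (A : Matrix (Fin 3) (Fin 3) ℝ) : Fin 3 → ℝ :=
  ![(A 2 1 - A 1 2) / 2, (A 0 2 - A 2 0) / 2, (A 1 0 - A 0 1) / 2]

/-- Euclidean norm of a vector. -/
def vecEnorm {α : Type*} [Fintype α] (x : α → ℝ) : ℝ :=
  Real.sqrt (∑ a, x a ^ 2)

lemma vecEnorm_sq {α : Type*} [Fintype α] (x : α → ℝ) : vecEnorm x ^ 2 = x ⬝ᵥ x := by
  rw [vecEnorm, Real.sq_sqrt (by positivity)]
  simp only [dotProduct, sq]

lemma two_mul_dotProduct_le {α : Type*} [Fintype α] (x y : α → ℝ) {c : ℝ} (hc : 0 < c) :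
    2 * (x ⬝ᵥ y) ≤ c * (x ⬝ᵥ x) + (y ⬝ᵥ y) / c := by
  have hsq : c * (x ⬝ᵥ x) + (y ⬝ᵥ y) / c - 2 * (x ⬝ᵥ y) = (c • x - y) ⬝ᵥ (c • x - y) / c := by
    simp only [dotProduct_sub, sub_dotProduct, dotProduct_smul, smul_dotProduct, smul_eq_mul,
      dotProduct_comm y x]
    field_simp
    ring
  have : 0 ≤ (c • x - y) ⬝ᵥ (c • x - y) := by simpa using dotProduct_self_star_nonneg (c • x - y)
  linarith [div_nonneg this hc.le]

lemma trace_mul_skew (A : Matrix (Fin 3) (Fin 3) ℝ) (u : Fin 3 → ℝ) :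
    trace (A * skew u) = -2 * (psiMap A ⬝ᵥ u) := by
  simp only [trace, diag_apply, skew, mul_apply, of_apply, cons_val', cons_val_fin_one,
    Fin.sum_univ_three, cons_val_zero, cons_val_one, cons_val, dotProduct, psiMap, Fin.isValue]
  ring

lemma psiMap_dotProduct_psiMap_mul {M R : Matrix (Fin 3) (Fin 3) ℝ} (hM : Mᵀ = M)
    (hR : R * Rᵀ = Rᵀ * R) :
    psiMap R ⬝ᵥ psiMap (M * R) =
      psiMap R ⬝ᵥ (((1/2 : ℝ) • (trace M • (1 : Matrix (Fin 3) (Fin 3) ℝ) - M)) *ᵥ psiMap R) := by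
  have h e f := congrFun (congrFun hR e) f
  have s e f := congrFun (congrFun hM e) f
  simp only [mul_apply, transpose_apply, Fin.sum_univ_three] at h s
  simp only [psiMap, dotProduct, mulVec, Matrix.smul_apply, Matrix.sub_apply, one_apply, trace,
    diag, Fin.sum_univ_three, mul_apply, smul_eq_mul, cons_val_zero, cons_val_one, cons_val_two,
    head_cons, tail_cons, Fin.isValue, reduceIte, Fin.reduceEq]
  linear_combination (M 0 0 - M 2 2)/8 * h 0 0 + (M 0 1 + M 1 0)/8 * h 0 1 + (M 0 2)/4 * h 0 2
    + (M 1 1 - M 2 2)/8 * h 1 1 + (M 1 2)/4 * h 1 2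
    + ((R 0 0 * R 0 1 - R 0 0 * R 1 0 + R 0 1 * R 1 1 + R 0 2 * R 2 1 - R 1 0 * R 1 1
      - R 1 2 * R 2 0)/8) * s 1 0
    + ((R 0 0 * R 0 2)/4 - (R 0 0 * R 2 0)/4 + (R 0 1 * R 1 2)/8 - (R 0 1 * R 2 1)/8
      + (R 1 0 * R 1 2)/8 - (R 1 0 * R 2 1)/8) * s 2 0
    + ((R 0 1 * R 0 2)/8 - (R 0 1 * R 2 0)/8 + (R 0 2 * R 1 0)/8 - (R 1 0 * R 2 0)/8
      + (R 1 1 * R 1 2)/4 - (R 1 1 * R 2 1)/4) * s 2 1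

lemma psiMap_dotProduct_psiMap_mul_nonneg {M R : Matrix (Fin 3) (Fin 3) ℝ} (hM : Mᵀ = M)
    (hR : R * Rᵀ = Rᵀ * R)
    (hMbar : ((1/2 : ℝ) • (trace M • (1 : Matrix (Fin 3) (Fin 3) ℝ) - M)).PosSemidef) :
    0 ≤ psiMap R ⬝ᵥ psiMap (M * R) := by
  rw [psiMap_dotProduct_psiMap_mul hM hR]
  simpa using hMbar.dotProduct_mulVec_nonneg (psiMap R)

lemma psiMap_dotProduct_self_le {R : Matrix (Fin 3) (Fin 3) ℝ} (hR : R * Rᵀ = 1) :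
    psiMap R ⬝ᵥ psiMap R ≤ 3/2 := by
  have h i := congrFun (congrFun hR i) i
  simp only [mul_apply, transpose_apply, one_apply_eq, Fin.sum_univ_three] at h
  simp only [psiMap, dotProduct, Fin.sum_univ_three, cons_val_zero, cons_val_one, cons_val_two,
    head_cons, tail_cons]
  nlinarith [h 0, h 1, h 2, sq_nonneg (R 2 1 + R 1 2), sq_nonneg (R 0 2 + R 2 0),
    sq_nonneg (R 1 0 + R 0 1), sq_nonneg (R 0 0), sq_nonneg (R 1 1), sq_nonneg (R 2 2)]

lemma neg_three_le_trace {R : Matrix (Fin 3) (Fin 3) ℝ} (hR : R * Rᵀ = 1) : -3 ≤ trace R := by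
  have h i := congrFun (congrFun hR i) i
  simp only [mul_apply, transpose_apply, one_apply_eq, Fin.sum_univ_three] at h
  simp only [trace, diag, Fin.sum_univ_three]
  nlinarith [h 0, h 1, h 2, sq_nonneg (R 0 0 + 1), sq_nonneg (R 1 1 + 1), sq_nonneg (R 2 2 + 1),
    sq_nonneg (R 0 1), sq_nonneg (R 0 2), sq_nonneg (R 1 0), sq_nonneg (R 1 2), sq_nonneg (R 2 0),
    sq_nonneg (R 2 1)]

lemma hasDerivAt_trace {n : Type*} [Fintype n] {A : ℝ → Matrix n n ℝ} {A' : Matrix n n ℝ} {t : ℝ}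
    (hA : ∀ i, HasDerivAt (fun s => A s i i) (A' i i) t) :
    HasDerivAt (fun s => trace (A s)) (trace A') t :=
  HasDerivAt.fun_sum fun i _ => hA i

lemma hasDerivAt_vecEnorm_sq {α : Type*} [Fintype α] {x : ℝ → α → ℝ} {x' : α → ℝ} {t : ℝ}
    (hx : ∀ i, HasDerivAt (fun s => x s i) (x' i) t) :
    HasDerivAt (fun s => vecEnorm (x s) ^ 2) (2 * (x t ⬝ᵥ x')) t := by
  simp only [vecEnorm_sq, dotProduct, Finset.mul_sum]
  exact HasDerivAt.fun_sum fun i _ => ((hx i).fun_mul (hx i)).congr_deriv (by ring)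

lemma attitude_estimate {M R : Matrix (Fin 3) (Fin 3) ℝ} (hM : Mᵀ = M)
    (hR : R * Rᵀ = 1) (hR' : Rᵀ * R = 1)
    (hMbar : ((1/2 : ℝ) • (trace M • (1 : Matrix (Fin 3) (Fin 3) ℝ) - M)).PosSemidef)
    (d : Fin 3 → ℝ) {k c a : ℝ} (hk : 0 ≤ k) (hc : 0 < c) (ha : 0 ≤ a) (hac : a ≤ c) :
    (1/2) * (psiMap R ⬝ᵥ (-(k • psiMap (M * R)) + d)) ≤
      -a * ((1/4) * trace (1 - R)) + 2 * c + vecEnorm d ^ 2 / (4 * c) := by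
  have hdamp := psiMap_dotProduct_psiMap_mul_nonneg hM (hR.trans hR'.symm) hMbar
  have hyoung := two_mul_dotProduct_le (psiMap R) d hc
  have hpsi : c * (psiMap R ⬝ᵥ psiMap R) ≤ c * (3/2) :=
    mul_le_mul_of_nonneg_left (psiMap_dotProduct_self_le hR) hc.le
  have htr : a * (3 - trace R) ≤ 6 * c := by nlinarith [neg_three_le_trace hR]
  rw [dotProduct_add, dotProduct_neg, dotProduct_smul, smul_eq_mul, trace_sub, trace_one,
    Fintype.card_fin, vecEnorm_sq, mul_comm 4 c, ← div_div]
  linarith [mul_nonneg hk hdamp]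

lemma position_estimate {α : Type*} [Fintype α] (p d : α → ℝ) {k a : ℝ} (hk : 0 < k)
    (hak : a ≤ k) :
    2 * (p ⬝ᵥ (-(k • p) + d)) ≤ -a * vecEnorm p ^ 2 + vecEnorm d ^ 2 / k := by
  have hyoung := two_mul_dotProduct_le p d hk
  have hp : a * (p ⬝ᵥ p) ≤ k * (p ⬝ᵥ p) :=
    mul_le_mul_of_nonneg_right hak (by simpa using dotProduct_self_star_nonneg p)
  rw [dotProduct_add, dotProduct_neg, dotProduct_smul, smul_eq_mul, vecEnorm_sq, vecEnorm_sq]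
  linarith

theorem ultimate_boundedness_inequality_general
    (Mmat : Matrix (Fin 3) (Fin 3) ℝ) (hMsym : Mmatᵀ = Mmat)
    (Mbar : Matrix (Fin 3) (Fin 3) ℝ)
    (hMbar : Mbar = (1/2 : ℝ) • (Matrix.trace Mmat • (1 : Matrix (Fin 3) (Fin 3) ℝ) - Mmat))
    (hPD : Mbar.PosDef)
    (lm : ℝ) (hlm : 0 < lm)
    (kR kp : ℝ) (hkR : 0 < kR) (hkp : 0 < kp)
    (Rtil : ℝ → Matrix (Fin 3) (Fin 3) ℝ) (hRSO : ∀ t, SO3 (Rtil t))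
    (ptil d1 d2 : ℝ → Fin 3 → ℝ)
    (hRdyn : ∀ t, ∀ i j, HasDerivAt (fun s => Rtil s i j)
      ((Rtil t * skew (-(kR • psiMap (Mmat * Rtil t)) + d1 t)) i j) t)
    (hpdyn : ∀ t, ∀ i, HasDerivAt (fun s => ptil s i) ((-(kp • ptil t) + d2 t) i) t)
    (W : ℝ → ℝ)
    (hW : ∀ t, W t = (1/4) * Matrix.trace (1 - Rtil t) + (vecEnorm (ptil t)) ^ 2) :
    (∀ t, DifferentiableAt ℝ W t) ∧
    ∀ t, deriv W t ≤ -(min (kR * lm) kp) * W t + 2 * kR * lm +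
      (vecEnorm (d1 t)) ^ 2 / (4 * kR * lm) + (vecEnorm (d2 t)) ^ 2 / kp := by
  have hW' : ∀ t, HasDerivAt W
      ((1/2) * (psiMap (Rtil t) ⬝ᵥ (-(kR • psiMap (Mmat * Rtil t)) + d1 t))
        + 2 * (ptil t ⬝ᵥ (-(kp • ptil t) + d2 t))) t := by
    intro t
    have hR := hasDerivAt_trace (A := fun s => 1 - Rtil s)
      (A' := -(Rtil t * skew (-(kR • psiMap (Mmat * Rtil t)) + d1 t)))
      fun i => (hRdyn t i i).const_sub _
    rw [funext hW]
    refine ((hR.const_mul (1/4)).fun_add (hasDerivAt_vecEnorm_sq (hpdyn t))).congr_deriv ?_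
    rw [trace_neg, trace_mul_skew]
    ring
  refine ⟨fun t => (hW' t).differentiableAt, fun t => ?_⟩
  obtain ⟨hR, hR', -⟩ := hRSO t
  have hc : 0 < kR * lm := mul_pos hkR hlm
  have hα : 0 ≤ min (kR * lm) kp := le_min hc.le hkp.le
  have hatt := attitude_estimate hMsym hR hR' (hMbar ▸ hPD.posSemidef) (d1 t) hkR.le hc hα
    (min_le_left _ _)
  have hpos := position_estimate (ptil t) (d2 t) hkp (min_le_right (kR * lm) kp)
  rw [(hW' t).deriv, hW t, mul_assoc 2 kR lm, mul_assoc 4 kR lm]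
  linarith

/-- ultimate-boundedness differential inequality for
`W = tr(I₃ - R̃)/4 + ‖p̃‖²` along the perturbed pose error dynamics. -/
theorem ultimate_boundedness_inequality
    (Mmat : Matrix (Fin 3) (Fin 3) ℝ) (hMsym : Mmatᵀ = Mmat)
    (Mbar : Matrix (Fin 3) (Fin 3) ℝ)
    (hMbar : Mbar = (1/2 : ℝ) • (Matrix.trace Mmat • (1 : Matrix (Fin 3) (Fin 3) ℝ) - Mmat))
    (hPD : Mbar.PosDef)
    (lm : ℝ) (hlm : 0 < lm)
    (hHerm : Mbar.IsHermitian)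
    (hmin : ∀ i, lm ≤ hHerm.eigenvalues i) (hex : ∃ i, hHerm.eigenvalues i = lm)
    (kR kp : ℝ) (hkR : 0 < kR) (hkp : 0 < kp)
    (Rtil : ℝ → Matrix (Fin 3) (Fin 3) ℝ) (hRSO : ∀ t, SO3 (Rtil t))
    (ptil d1 d2 : ℝ → Fin 3 → ℝ)
    (hRdyn : ∀ t, ∀ i j, HasDerivAt (fun s => Rtil s i j)
      ((Rtil t * skew (-(kR • psiMap (Mmat * Rtil t)) + d1 t)) i j) t)
    (hpdyn : ∀ t, ∀ i, HasDerivAt (fun s => ptil s i) ((-(kp • ptil t) + d2 t) i) t)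
    (W : ℝ → ℝ)
    (hW : ∀ t, W t = (1/4) * Matrix.trace (1 - Rtil t) + (vecEnorm (ptil t)) ^ 2) :
    (∀ t, DifferentiableAt ℝ W t) ∧
    ∀ t, deriv W t ≤ -(min (kR * lm) kp) * W t + 2 * kR * lm +
      (vecEnorm (d1 t)) ^ 2 / (4 * kR * lm) + (vecEnorm (d2 t)) ^ 2 / kp :=
  ultimate_boundedness_inequality_general Mmat hMsym Mbar hMbar hPD lm hlm kR kp hkR hkp Rtil hRSO
    ptil d1 d2 hRdyn hpdyn W hW
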